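/- For every μ > 0, t > 0 and every real η with η > 0 and (η−1)/2 + μ > 0, the Mellin transform of the density q(x,t;μ) = ∫₀^∞ (2πs)^(−1/2) e^(−x²/(2s)) · s^(μ−1) e^(−s/t) / (t^μ Γ(μ)) ds of the process B(G₁(t)) satisfies ∫₀^∞ x^(η−1) q(x,t;μ) dx = ( 2^((η−1)/2) / (2√π) ) · Γ(η/2) · Γ((η−1)/2 + μ) · t^((η−1)/2) / Γ(μ). -/

import Mathlib

/-!
Writing `q` as the mixture `∫ p(x,s) Q(s) ds` and exchanging the order of integration (Tonelli:
everything is nonnegative), the Mellin transform of `q` is the average over the Gamma law of the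
Mellin transform of the Gaussian, `∫₀^∞ x^(η-1) p(x,s) dx = 2^((η-1)/2) Γ(η/2) s^((η-1)/2) / (2√π)`.
What remains is the moment `∫₀^∞ s^((η-1)/2) Q(s) ds = Γ((η-1)/2 + μ) t^((η-1)/2) / Γ(μ)`.
-/

open MeasureTheory

/-- The density of `B(G₁(t))`, a standard Brownian motion subordinated to an
independent Gamma process. -/
noncomputable def qBG (μ x t : ℝ) : ℝ :=
  ∫ s in Set.Ioi (0:ℝ),
    (2 * Real.pi * s) ^ (-(1:ℝ) / 2) * Real.exp (-x ^ 2 / (2 * s)) *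
      (s ^ (μ - 1) * Real.exp (-s / t) / (t ^ μ * Real.Gamma μ))

open Real Set

noncomputable def brownianDensity (x s : ℝ) : ℝ :=
  (2 * π * s) ^ (-(1:ℝ) / 2) * exp (-x ^ 2 / (2 * s))

noncomputable def gammaProcessDensity (μ t s : ℝ) : ℝ :=
  s ^ (μ - 1) * exp (-s / t) / (t ^ μ * Gamma μ)

lemma qBG_eq_integral (μ x t : ℝ) :
    qBG μ x t = ∫ s in Ioi 0, brownianDensity x s * gammaProcessDensity μ t s :=
  rfl

theorem integral_integral_swap_of_nonneg {α β : Type*} [MeasurableSpace α] [MeasurableSpace β]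
    {μ : Measure α} {ν : Measure β} [SFinite μ] [SFinite ν] {F : α → β → ℝ}
    (hF : AEStronglyMeasurable (Function.uncurry F) (μ.prod ν))
    (hF_nonneg : ∀ᵐ y ∂ν, ∀ᵐ x ∂μ, 0 ≤ F x y)
    (hF_int : ∀ᵐ y ∂ν, Integrable (fun x => F x y) μ)
    (hG : Integrable (fun y => ∫ x, F x y ∂μ) ν) :
    ∫ x, ∫ y, F x y ∂ν ∂μ = ∫ y, ∫ x, F x y ∂μ ∂ν := by
  refine integral_integral_swap ((integrable_prod_iff' hF).2 ⟨hF_int, hG.congr ?_⟩)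
  filter_upwards [hF_nonneg] with y hy
  exact integral_congr_ae (hy.mono fun x hx => (norm_of_nonneg hx).symm)

section Gaussian

variable {η s : ℝ}

lemma rpow_mul_brownianDensity (x : ℝ) :
    x ^ (η - 1) * brownianDensity x s
      = (2 * π * s) ^ (-(1:ℝ) / 2) * (x ^ (η - 1) * exp (-(2 * s)⁻¹ * x ^ 2)) := by
  rw [brownianDensity, mul_left_comm]
  congr 3
  ring

lemma integrableOn_rpow_mul_brownianDensity (hη : 0 < η) (hs : 0 < s) :
    IntegrableOn (fun x => x ^ (η - 1) * brownianDensity x s) (Ioi 0) := by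
  simp_rw [rpow_mul_brownianDensity]
  exact (integrableOn_rpow_mul_exp_neg_mul_sq (by positivity) (by linarith)).const_mul _

theorem integral_rpow_mul_brownianDensity (hη : 0 < η) (hs : 0 < s) :
    ∫ x in Ioi 0, x ^ (η - 1) * brownianDensity x s
      = 2 ^ ((η - 1) / 2) / (2 * √π) * Gamma (η / 2) * s ^ ((η - 1) / 2) := by
  have hgauss := integral_rpow_mul_exp_neg_mul_rpow two_pos (by linarith : -1 < η - 1)
    (inv_pos.2 (by positivity : 0 < 2 * s))
  simp_rw [rpow_two, sub_add_cancel] at hgauss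
  simp_rw [rpow_mul_brownianDensity, integral_const_mul, hgauss]
  have h2s : 0 < 2 * s := by positivity
  have hpow : (2 * s)⁻¹ ^ (-η / 2) * (2 * s) ^ (-(1:ℝ) / 2)
      = 2 ^ ((η - 1) / 2) * s ^ ((η - 1) / 2) := by
    rw [inv_rpow h2s.le, ← rpow_neg h2s.le, ← rpow_add h2s, mul_rpow zero_le_two hs.le]
    ring_nf
  have hpi : π ^ (-(1:ℝ) / 2) = (√π)⁻¹ := by
    rw [sqrt_eq_rpow, ← rpow_neg pi_pos.le]
    norm_num
  rw [show 2 * π * s = (2 * s) * π by ring, mul_rpow h2s.le pi_pos.le, hpi]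
  linear_combination (Gamma (η / 2) / (2 * √π)) * hpow

end Gaussian

section GammaMoments

variable {μ t a : ℝ}

lemma rpow_mul_gammaProcessDensity {s : ℝ} (hs : 0 < s) :
    s ^ a * gammaProcessDensity μ t s
      = (t ^ μ * Gamma μ)⁻¹ * (s ^ (a + μ - 1) * exp (-(t⁻¹ * s))) := by
  rw [gammaProcessDensity, add_sub_assoc, rpow_add hs, div_eq_inv_mul, neg_div, div_eq_inv_mul]
  ring

lemma integrableOn_rpow_mul_gammaProcessDensity (ht : 0 < t) (ha : 0 < a + μ) :
    IntegrableOn (fun s => s ^ a * gammaProcessDensity μ t s) (Ioi 0) := by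
  have hgamma : IntegrableOn (fun s => s ^ (a + μ - 1) * exp (-(t⁻¹ * s))) (Ioi 0) := by
    simpa only [rpow_one, neg_mul] using
      integrableOn_rpow_mul_exp_neg_mul_rpow (by linarith : -1 < a + μ - 1) one_pos (inv_pos.2 ht)
  exact IntegrableOn.congr_fun (hgamma.const_mul _)
    (fun s hs => (rpow_mul_gammaProcessDensity hs).symm) measurableSet_Ioi

theorem integral_rpow_mul_gammaProcessDensity (ht : 0 < t) (ha : 0 < a + μ) :
    ∫ s in Ioi 0, s ^ a * gammaProcessDensity μ t s = Gamma (a + μ) * t ^ a / Gamma μ := by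
  rw [setIntegral_congr_fun measurableSet_Ioi fun s hs => rpow_mul_gammaProcessDensity hs,
    integral_const_mul, integral_rpow_mul_exp_neg_mul_Ioi ha (inv_pos.2 ht), one_div, inv_inv,
    rpow_add ht, mul_inv, div_eq_mul_inv]
  field_simp [(rpow_pos_of_pos ht μ).ne']

end GammaMoments

section Mixture

variable {μ t η : ℝ}

lemma brownianDensity_nonneg (x : ℝ) {s : ℝ} (hs : 0 < s) : 0 ≤ brownianDensity x s := by
  unfold brownianDensity
  positivity

lemma gammaProcessDensity_nonneg (hμ : 0 < μ) (ht : 0 < t) {s : ℝ} (hs : 0 < s) :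
    0 ≤ gammaProcessDensity μ t s := by
  have := Gamma_pos_of_pos hμ
  unfold gammaProcessDensity
  positivity

lemma integral_rpow_mul_brownianDensity_mul (hη : 0 < η) {s : ℝ} (hs : 0 < s) (c : ℝ) :
    ∫ x in Ioi 0, x ^ (η - 1) * (brownianDensity x s * c)
      = 2 ^ ((η - 1) / 2) / (2 * √π) * Gamma (η / 2) * (s ^ ((η - 1) / 2) * c) := by
  simp_rw [← mul_assoc, integral_mul_const, integral_rpow_mul_brownianDensity hη hs]

theorem integral_integral_swap_brownianDensity_mul_gammaProcessDensity (hμ : 0 < μ)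
    (ht : 0 < t) (hη : 0 < η) (hημ : 0 < (η - 1) / 2 + μ) :
    ∫ x in Ioi 0, ∫ s in Ioi 0, x ^ (η - 1) * (brownianDensity x s * gammaProcessDensity μ t s)
      = ∫ s in Ioi 0, ∫ x in Ioi 0,
          x ^ (η - 1) * (brownianDensity x s * gammaProcessDensity μ t s) := by
  refine integral_integral_swap_of_nonneg ?_ ?_ ?_ ?_
  · refine Measurable.aestronglyMeasurable ?_
    simp only [brownianDensity, gammaProcessDensity]
    fun_prop
  · filter_upwards [ae_restrict_mem measurableSet_Ioi] with s (hs : 0 < s)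
    filter_upwards [ae_restrict_mem measurableSet_Ioi] with x (hx : 0 < x)
    exact mul_nonneg (rpow_nonneg hx.le _)
      (mul_nonneg (brownianDensity_nonneg x hs) (gammaProcessDensity_nonneg hμ ht hs))
  · filter_upwards [ae_restrict_mem measurableSet_Ioi] with s hs
    simpa only [← mul_assoc] using
      (integrableOn_rpow_mul_brownianDensity hη hs).mul_const (gammaProcessDensity μ t s)
  · exact IntegrableOn.congr_fun
      ((integrableOn_rpow_mul_gammaProcessDensity ht hημ).const_mul _)
      (fun s hs => (integral_rpow_mul_brownianDensity_mul hη hs _).symm) measurableSet_Ioi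

end Mixture

/-- the Mellin transform of the density of `B(G₁(t))` is
`∫₀^∞ x^(η−1) q(x,t;μ) dx
   = (2^((η−1)/2)/(2√π)) Γ(η/2) Γ((η−1)/2 + μ) t^((η−1)/2) / Γ(μ)`
for `η > 0` with `(η−1)/2 + μ > 0`. -/
theorem stmt_14 (μ : ℝ) (hμ : 0 < μ) (t η : ℝ) (ht : 0 < t)
    (hη₀ : 0 < η) (hημ : 0 < (η - 1) / 2 + μ) :
    (∫ x in Set.Ioi (0:ℝ), x ^ (η - 1) * qBG μ x t)
      = (2:ℝ) ^ ((η - 1) / 2) / (2 * Real.sqrt Real.pi) * Real.Gamma (η / 2) *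
          Real.Gamma ((η - 1) / 2 + μ) * t ^ ((η - 1) / 2) / Real.Gamma μ := by
  calc ∫ x in Ioi 0, x ^ (η - 1) * qBG μ x t
      = ∫ x in Ioi 0, ∫ s in Ioi 0,
          x ^ (η - 1) * (brownianDensity x s * gammaProcessDensity μ t s) := by
        simp_rw [qBG_eq_integral, integral_const_mul]
    _ = ∫ s in Ioi 0, 2 ^ ((η - 1) / 2) / (2 * √π) * Gamma (η / 2) *
          (s ^ ((η - 1) / 2) * gammaProcessDensity μ t s) := by
        rw [integral_integral_swap_brownianDensity_mul_gammaProcessDensity hμ ht hη₀ hημ]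
        exact setIntegral_congr_fun measurableSet_Ioi fun s hs =>
          integral_rpow_mul_brownianDensity_mul hη₀ hs _
    _ = _ := by
        rw [integral_const_mul, integral_rpow_mul_gammaProcessDensity ht hημ]
        ring
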